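/- For every particle configuration σ, the induced map [ρ] ↦ [σρ] on equivalence classes of rotor configurations on G is a well-defined bijection. Consequently the action of the sandpile monoid Q° on rotor configurations projects to a group action of the sandpile group S(G/T) on the set of equivalence classes of rotor configurations. -/

import Mathlib

open Function

/-- A strongly connected finite directed multigraph (self-loops and multiple arcs
allowed), given by source and head maps `src, head : E → V`, together with a nonempty
target set `T` and a rotor mechanism at each vertex: `next` is a cyclic ordering of
the arcs emanating from each vertex (it permutes the arcs, preserves the source, and
acts transitively on the arcs emanating from any fixed vertex). -/
structure RotorSystem (V E : Type) [Fintype V] [DecidableEq V] [Fintype E]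
    [DecidableEq E] where
  src : E → V
  head : E → V
  T : Finset V
  T_nonempty : T.Nonempty
  strongly_connected : ∀ v w : V,
    Relation.ReflTransGen (fun a b => ∃ e : E, src e = a ∧ head e = b) v w
  next : E → E
  next_src : ∀ e, src (next e) = src e
  next_bijective : Function.Bijective next
  next_cyclic : ∀ e e', src e = src e' → ∃ k : ℕ, next^[k] e = e'

namespace RotorSystem

variable {V E : Type} [Fintype V] [DecidableEq V] [Fintype E] [DecidableEq E]

/-- The set `V₀ = V - T` of non-target vertices. -/
abbrev V0 (S : RotorSystem V E) : Type := {v : V // v ∉ S.T}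

/-- A rotor configuration: each non-target vertex carries an arc emanating from it. -/
abbrev RConf (S : RotorSystem V E) : Type :=
  {ρ : S.V0 → E // ∀ v : S.V0, S.src (ρ v) = v.1}

/-- A particle configuration: a number of particles at each non-target vertex. -/
abbrev PConf (S : RotorSystem V E) : Type := S.V0 → ℕ

variable (S : RotorSystem V E)

/-- One step of a single particle's rotor walk: at a non-target vertex the rotor is
first progressed and the particle then moves along the new rotor arc; target vertices
absorb the particle. -/
def step (p : V × S.RConf) : V × S.RConf :=
  if h : p.1 ∈ S.T then p
  else
    (S.head (S.next (p.2.1 ⟨p.1, h⟩)),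
      ⟨Function.update p.2.1 ⟨p.1, h⟩ (S.next (p.2.1 ⟨p.1, h⟩)), by
        intro w
        rcases eq_or_ne w ⟨p.1, h⟩ with rfl | hw
        · rw [Function.update_self, S.next_src]
          exact p.2.2 ⟨p.1, h⟩
        · rw [Function.update_of_ne hw]
          exact p.2.2 w⟩)

open Classical in
/-- Route a single particle from `x` by rotor walk until it first reaches the target
set; the result is the pair (final position, final rotor configuration). -/
noncomputable def route (x : V) (ρ : S.RConf) : V × S.RConf :=
  if h : ∃ n, (S.step^[n] (x, ρ)).1 ∈ S.T then S.step^[Nat.find h] (x, ρ) else (x, ρ)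

/-- `t_x(ρ)`: the target vertex reached by a single particle started at `x` with
initial rotor configuration `ρ`. -/
noncomputable def tgt (x : V) (ρ : S.RConf) : V := (S.route x ρ).1

/-- The particle addition operator `E_v`: add one particle at `v` and route it to the
target set. -/
noncomputable def addAt (v : S.V0) (ρ : S.RConf) : S.RConf := (S.route v.1 ρ).2

/-- The action `σρ` of a particle configuration on a rotor configuration: place
`σ v` particles at each vertex `v` and route them all to the target set. -/
noncomputable def act (σ : S.PConf) (ρ : S.RConf) : S.RConf :=
  (Finset.univ : Finset S.V0).toList.foldr (fun v r => (S.addAt v)^[σ v] r) ρ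

/-- Equivalence of rotor configurations: `ρ ≡ ρ'` iff `σρ = σρ'` for some particle
configuration `σ`. -/
def REquiv (ρ ρ' : S.RConf) : Prop := ∃ σ : S.PConf, S.act σ ρ = S.act σ ρ'

/-- The outdegree `d(v)`. -/
def outdeg (v : V) : ℕ := (Finset.univ.filter fun e : E => S.src e = v).card

/-- The number `d(v,w)` of arcs from `v` to `w`. -/
def numArcs (v w : V) : ℕ :=
  (Finset.univ.filter fun e : E => S.src e = v ∧ S.head e = w).card

/-- A particle configuration is stable if every non-target vertex holds at most
`d(v) - 1` particles. -/
def IsStable (σ : S.PConf) : Prop := ∀ v : S.V0, σ v < S.outdeg v.1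

/-- Parallel toppling: every unstable vertex topples once, sending one particle along
each arc emanating from it. -/
def toppleStep (σ : S.PConf) : S.PConf := fun v =>
  (if S.outdeg v.1 ≤ σ v then σ v - S.outdeg v.1 else σ v) +
    ∑ w : S.V0, (if S.outdeg w.1 ≤ σ w then S.numArcs w.1 v.1 else 0)

open Classical in
/-- The stabilization `σ°` of a particle configuration. -/
noncomputable def stabilize (σ : S.PConf) : S.PConf :=
  if h : ∃ n, S.IsStable (S.toppleStep^[n] σ) then S.toppleStep^[Nat.find h] σ else σ

/-- A stable particle configuration is recurrent if it is reachable (by adding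
particles and stabilizing) from every particle configuration.  The recurrent
configurations form the sandpile group `S(G/T)` under addition-then-stabilization. -/
def IsRecurrent (τ : S.PConf) : Prop :=
  S.IsStable τ ∧ ∀ σ : S.PConf, ∃ τ' : S.PConf, τ = S.stabilize (τ' + σ)

/-- `e` is the identity element of the sandpile group `S(G/T)`. -/
def IsSandpileIdentity (e : S.PConf) : Prop :=
  S.IsRecurrent e ∧ ∀ τ : S.PConf, S.IsRecurrent τ → S.stabilize (e + τ) = τ

/-- The rotor arcs of `ρ`, as a relation on vertices. -/
def rotorRel (ρ : S.RConf) (a b : V) : Prop :=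
  ∃ h : a ∉ S.T, S.head (ρ.1 ⟨a, h⟩) = b

/-- A rotor configuration is acyclic if its rotor arcs contain no directed cycle. -/
def IsAcyclicConf (ρ : S.RConf) : Prop :=
  ∀ v : V, ¬ Relation.TransGen (S.rotorRel ρ) v v

/-- `ρ'` is obtained from `ρ` by pushing a cycle: there are distinct non-target
vertices `v_0, …, v_{r-1}` with the rotor arc of `v_j` pointing to `v_{j+1}`
(cyclically); each such rotor is regressed one step, other rotors are unchanged. -/
def IsCyclePush (ρ ρ' : S.RConf) : Prop :=
  ∃ r : ℕ, 0 < r ∧ ∃ f : ZMod r → S.V0, Function.Injective f ∧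
    (∀ j : ZMod r, S.head (ρ.1 (f j)) = (f (j + 1)).1) ∧
    (∀ j : ZMod r, S.next (ρ'.1 (f j)) = ρ.1 (f j)) ∧
    (∀ v : S.V0, v ∉ Set.range f → ρ'.1 v = ρ.1 v)

end RotorSystem

/-!
Two properties of the action carry the proof.

*Abelian property.* Moving particles one rotor step at a time is a rewriting system with
the diamond property (steps of distinct particles commute), and states with every particle
on `T` admit no move, so by Church–Rosser the final rotor configuration does not depend on
the order of the steps. Every particle does reach `T`: a vertex visited infinitely often
sends the walk along each of its arcs infinitely often, and strong connectivity leads to `T`.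
Hence `(σ + τ)ρ = σ(τρ)`.

*Toppling invariance.* `d(v)` particles at `v` leave once along every arc out of `v` and
turn the rotor at `v` through a full cycle, so `σ°ρ = σρ`.

Then `≡` is preserved by the action, and `σρ ≡ σρ'` (witnessed by `τ`) gives `ρ ≡ ρ'`
(witnessed by `τ + σ`), so `[ρ] ↦ [σρ]` is an injection, hence a bijection, of the finite
set of classes. The identity `e` satisfies `(e + e)° = e`, so `e(eρ) = eρ`, i.e. `eρ ≡ ρ`.
-/

namespace RotorSystem

open Filter Relation

variable {V E : Type} [Fintype V] [DecidableEq V] [Fintype E] [DecidableEq E]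
  (S : RotorSystem V E)

section Walk

theorem step_of_mem {p : V × S.RConf} (h : p.1 ∈ S.T) : S.step p = p := by
  rw [step, dif_pos h]

theorem step_fst_of_notMem {p : V × S.RConf} (h : p.1 ∉ S.T) :
    (S.step p).1 = S.head (S.next (p.2.1 ⟨p.1, h⟩)) := by
  rw [step, dif_neg h]

theorem step_snd_apply (p : V × S.RConf) (w : S.V0) :
    (S.step p).2.1 w = if w.1 = p.1 then S.next (p.2.1 w) else p.2.1 w := by
  by_cases h : p.1 ∈ S.T
  · rw [S.step_of_mem h, if_neg (fun hw : w.1 = p.1 => w.2 (hw ▸ h))]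
  · rw [step, dif_neg h]
    by_cases hw : w.1 = p.1
    · obtain rfl : w = ⟨p.1, h⟩ := Subtype.ext hw
      simp
    · simp [Function.update_of_ne (fun h' : w = ⟨p.1, h⟩ => hw (congrArg Subtype.val h')), hw]

theorem iterate_step_snd_apply (p : V × S.RConf) (w : S.V0) (n : ℕ) :
    (S.step^[n] p).2.1 w =
      S.next^[Nat.count (fun i => (S.step^[i] p).1 = w.1) n] (p.2.1 w) := by
  induction n with
  | zero => rfl
  | succ n ih =>
    rw [Function.iterate_succ_apply', S.step_snd_apply, Nat.count_succ, ih]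
    by_cases hw : w.1 = (S.step^[n] p).1
    · rw [if_pos hw, if_pos hw.symm, Function.iterate_succ_apply']
    · rw [if_neg hw, if_neg (Ne.symm hw), add_zero]

theorem exists_iterate_step_fst_eq_head {p : V × S.RConf} {w : V} (hw : w ∉ S.T)
    (h : ∃ᶠ n in atTop, (S.step^[n] p).1 = w) {e : E} (he : S.src e = w) :
    ∃ n, (S.step^[n] p).1 = S.head e := by
  -- The `k`-th visit to `w` leaves along `next^[k + 1]` of the initial rotor at `w`,
  -- and by cyclicity of the rotor mechanism this is `e` for a suitable `k`.
  have hinf := Nat.frequently_atTop_iff_infinite.1 h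
  obtain ⟨k, hk⟩ := S.next_cyclic (S.next (p.2.1 ⟨w, hw⟩)) e
    (by rw [S.next_src, p.2.2, he])
  set n := Nat.nth (fun i => (S.step^[i] p).1 = w) k
  have hvisit : (S.step^[n] p).1 = w := Nat.nth_mem_of_infinite hinf k
  have hcount : Nat.count (fun i => (S.step^[i] p).1 = w) n = k :=
    Nat.count_nth_of_infinite hinf k
  refine ⟨n + 1, ?_⟩
  rw [Function.iterate_succ_apply', S.step_fst_of_notMem (hvisit ▸ hw)]
  have hrotor := S.iterate_step_snd_apply p ⟨w, hw⟩ n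
  simp only [hvisit, hrotor, hcount, ← hk, ← Function.iterate_succ_apply' S.next,
    Function.iterate_succ_apply]

theorem frequently_iterate_step_fst_eq_head {p : V × S.RConf} {w : V} (hw : w ∉ S.T)
    (h : ∃ᶠ n in atTop, (S.step^[n] p).1 = w) {e : E} (he : S.src e = w) :
    ∃ᶠ n in atTop, (S.step^[n] p).1 = S.head e := by
  rw [frequently_atTop]
  intro N
  have hN : ∃ᶠ n in atTop, (S.step^[n] (S.step^[N] p)).1 = w := by
    simp only [← Function.iterate_add_apply]
    rwa [← map_add_atTop_eq_nat N, frequently_map] at h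
  obtain ⟨n, hn⟩ := S.exists_iterate_step_fst_eq_head hw hN he
  exact ⟨n + N, Nat.le_add_left N n, by rwa [Function.iterate_add_apply]⟩

theorem exists_iterate_step_fst_mem (p : V × S.RConf) : ∃ n, (S.step^[n] p).1 ∈ S.T := by
  by_contra! hout
  obtain ⟨w, hw⟩ := Finite.exists_infinite_fiber fun n => (S.step^[n] p).1
  have hreach : ∀ u, ReflTransGen (fun a b => ∃ e : E, S.src e = a ∧ S.head e = b) w u →
      ∃ᶠ n in atTop, (S.step^[n] p).1 = u := by
    intro u hwu
    induction hwu with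
    | refl => exact Nat.frequently_atTop_iff_infinite.2 (Set.infinite_coe_iff.1 hw)
    | tail _ hbc ih =>
      obtain ⟨e, he, rfl⟩ := hbc
      obtain ⟨n, hn⟩ := ih.exists
      exact S.frequently_iterate_step_fst_eq_head (hn ▸ hout n) ih he
  obtain ⟨t, ht⟩ := S.T_nonempty
  obtain ⟨n, hn⟩ := (hreach t (S.strongly_connected w t)).exists
  exact hout n (hn ▸ ht)

theorem route_fst_mem (x : V) (ρ : S.RConf) : (S.route x ρ).1 ∈ S.T := by
  classical
  have h := S.exists_iterate_step_fst_mem (x, ρ)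
  rw [route, dif_pos h]
  exact Nat.find_spec h

theorem exists_route_eq_iterate (x : V) (ρ : S.RConf) :
    ∃ n, S.route x ρ = S.step^[n] (x, ρ) := by
  unfold route
  split
  · exact ⟨_, rfl⟩
  · exact ⟨0, rfl⟩

end Walk

section Confluence

/-- A state of the multi-particle walk is a multiset of particle positions together with
a rotor configuration; in a move one particle outside `T` takes a rotor step, while
particles on `T` stay where they are. -/
def Move (s t : Multiset V × S.RConf) : Prop :=
  ∃ x ν, x ∉ S.T ∧ s.1 = x ::ₘ ν ∧ t = ((S.step (x, s.2)).1 ::ₘ ν, (S.step (x, s.2)).2)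

def IsSettled (s : Multiset V × S.RConf) : Prop := ∀ x ∈ s.1, x ∈ S.T

theorem not_move_of_isSettled {s t : Multiset V × S.RConf} (hs : S.IsSettled s) :
    ¬ S.Move s t := by
  rintro ⟨x, ν, hx, hs₁, -⟩
  exact hx (hs x (hs₁ ▸ Multiset.mem_cons_self x ν))

theorem move_add_right {s t : Multiset V × S.RConf} (h : S.Move s t) (ν : Multiset V) :
    S.Move (s.1 + ν, s.2) (t.1 + ν, t.2) := by
  obtain ⟨x, μ, hx, hs, rfl⟩ := h
  exact ⟨x, μ + ν, hx, by rw [hs, Multiset.cons_add], by rw [Multiset.cons_add]⟩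

theorem reflTransGen_move_add_right {s t : Multiset V × S.RConf}
    (h : ReflTransGen S.Move s t) (ν : Multiset V) :
    ReflTransGen S.Move (s.1 + ν, s.2) (t.1 + ν, t.2) :=
  ReflTransGen.lift (fun s : Multiset V × S.RConf => (s.1 + ν, s.2))
    (fun _ _ h => S.move_add_right h ν) _ _ h

theorem step_step_of_ne {x y : V} (hy : y ∉ S.T) (hxy : x ≠ y) (ρ : S.RConf) :
    (S.step (y, (S.step (x, ρ)).2)).1 = (S.step (y, ρ)).1 ∧
      (S.step (y, (S.step (x, ρ)).2)).2 = (S.step (x, (S.step (y, ρ)).2)).2 := by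
  refine ⟨?_, Subtype.ext (funext fun w => ?_)⟩
  · rw [S.step_fst_of_notMem hy, S.step_fst_of_notMem hy, S.step_snd_apply,
      if_neg (Ne.symm hxy)]
  · simp only [S.step_snd_apply]
    by_cases hwx : w.1 = x
    · simp [hwx, hxy]
    · by_cases hwy : w.1 = y <;> simp [hwx, hwy, Ne.symm hxy]

theorem move_diamond {s a b : Multiset V × S.RConf} (ha : S.Move s a) (hb : S.Move s b) :
    a = b ∨ ∃ c, S.Move a c ∧ S.Move b c := by
  obtain ⟨x, ν, hx, hsx, rfl⟩ := ha
  obtain ⟨y, μ, hy, hsy, rfl⟩ := hb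
  rcases Multiset.cons_eq_cons.1 (hsx.symm.trans hsy) with ⟨rfl, rfl⟩ | ⟨hxy, κ, rfl, rfl⟩
  · exact Or.inl rfl
  obtain ⟨hfy, hcomm⟩ := S.step_step_of_ne hy hxy s.2
  obtain ⟨hfx, -⟩ := S.step_step_of_ne hx (Ne.symm hxy) s.2
  refine Or.inr ⟨((S.step (y, s.2)).1 ::ₘ (S.step (x, s.2)).1 ::ₘ κ,
    (S.step (y, (S.step (x, s.2)).2)).2), ⟨y, _, hy, Multiset.cons_swap _ _ _, ?_⟩,
    ⟨x, _, hx, Multiset.cons_swap _ _ _, ?_⟩⟩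
  · rw [hfy]
  · rw [hfx, hcomm, Multiset.cons_swap]

theorem eq_of_reflTransGen_move_of_isSettled {s a b : Multiset V × S.RConf}
    (ha : ReflTransGen S.Move s a) (hb : ReflTransGen S.Move s b)
    (ha' : S.IsSettled a) (hb' : S.IsSettled b) : a = b := by
  have final : ∀ {u v}, S.IsSettled u → ReflTransGen S.Move u v → u = v := fun hu huv =>
    huv.cases_head.resolve_right fun ⟨_, h, _⟩ => S.not_move_of_isSettled hu h
  have joinable : ∀ s a b, S.Move s a → S.Move s b →
      ∃ c, ReflGen S.Move a c ∧ ReflTransGen S.Move b c := by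
    intro s a b h₁ h₂
    rcases S.move_diamond h₁ h₂ with rfl | ⟨c, h₁c, h₂c⟩
    · exact ⟨a, ReflGen.refl, ReflTransGen.refl⟩
    · exact ⟨c, ReflGen.single h₁c, ReflTransGen.single h₂c⟩
  obtain ⟨c, hac, hbc⟩ := church_rosser joinable ha hb
  exact (final ha' hac).trans (final hb' hbc).symm

end Confluence

section Settling

def SettlesTo (s : Multiset V × S.RConf) (ρ : S.RConf) : Prop :=
  ∃ M, (∀ x ∈ M, x ∈ S.T) ∧ ReflTransGen S.Move s (M, ρ)

variable {S}

theorem SettlesTo.unique {s : Multiset V × S.RConf} {ρ₁ ρ₂ : S.RConf}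
    (h₁ : S.SettlesTo s ρ₁) (h₂ : S.SettlesTo s ρ₂) : ρ₁ = ρ₂ := by
  obtain ⟨M₁, hM₁, hs₁⟩ := h₁
  obtain ⟨M₂, hM₂, hs₂⟩ := h₂
  exact congrArg Prod.snd (S.eq_of_reflTransGen_move_of_isSettled hs₁ hs₂ hM₁ hM₂)

theorem SettlesTo.head {s t : Multiset V × S.RConf} {ρ : S.RConf}
    (hst : ReflTransGen S.Move s t) (ht : S.SettlesTo t ρ) : S.SettlesTo s ρ := by
  obtain ⟨M, hM, htM⟩ := ht
  exact ⟨M, hM, hst.trans htM⟩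

theorem SettlesTo.add {A B : Multiset V} {ρ ρ₁ ρ₂ : S.RConf}
    (hA : S.SettlesTo (A, ρ) ρ₁) (hB : S.SettlesTo (B, ρ₁) ρ₂) :
    S.SettlesTo (A + B, ρ) ρ₂ := by
  obtain ⟨M₁, hM₁, h₁⟩ := hA
  obtain ⟨M₂, hM₂, h₂⟩ := hB
  refine ⟨M₂ + M₁, fun x hx => ?_, ?_⟩
  · rcases Multiset.mem_add.1 hx with hx | hx
    exacts [hM₂ x hx, hM₁ x hx]
  · have h₂' := S.reflTransGen_move_add_right h₂ M₁
    rw [add_comm B] at h₂'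
    exact (S.reflTransGen_move_add_right h₁ B).trans h₂'

theorem settlesTo_of_forall_mem {M : Multiset V} (hM : ∀ x ∈ M, x ∈ S.T) (ρ : S.RConf) :
    S.SettlesTo (M, ρ) ρ :=
  ⟨M, hM, ReflTransGen.refl⟩

variable (S)

theorem reflTransGen_move_step (p : V × S.RConf) :
    ReflTransGen S.Move ({p.1}, p.2) ({(S.step p).1}, (S.step p).2) := by
  by_cases h : p.1 ∈ S.T
  · rw [S.step_of_mem h]
  · exact ReflTransGen.single ⟨p.1, 0, h, rfl, rfl⟩

theorem reflTransGen_move_iterate_step (p : V × S.RConf) (n : ℕ) :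
    ReflTransGen S.Move ({p.1}, p.2) ({(S.step^[n] p).1}, (S.step^[n] p).2) := by
  induction n with
  | zero => exact ReflTransGen.refl
  | succ n ih =>
    rw [Function.iterate_succ_apply']
    exact ih.trans (S.reflTransGen_move_step _)

theorem settlesTo_addAt (v : S.V0) (ρ : S.RConf) : S.SettlesTo ({v.1}, ρ) (S.addAt v ρ) := by
  obtain ⟨n, hn⟩ := S.exists_route_eq_iterate v.1 ρ
  refine ⟨{(S.route v.1 ρ).1}, ?_, ?_⟩
  · simpa using S.route_fst_mem v.1 ρ
  · rw [addAt, hn]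
    exact S.reflTransGen_move_iterate_step (v.1, ρ) n

theorem settlesTo_iterate_addAt (v : S.V0) (k : ℕ) (ρ : S.RConf) :
    S.SettlesTo (k • {v.1}, ρ) ((S.addAt v)^[k] ρ) := by
  induction k generalizing ρ with
  | zero => exact settlesTo_of_forall_mem (by simp) ρ
  | succ k ih =>
    rw [succ_nsmul', Function.iterate_succ_apply]
    exact (S.settlesTo_addAt v ρ).add (ih _)

def particles (σ : S.PConf) : Multiset V := ∑ v : S.V0, σ v • {v.1}

theorem particles_add (σ τ : S.PConf) : S.particles (σ + τ) = S.particles σ + S.particles τ := by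
  simp only [particles, Pi.add_apply, add_nsmul, Finset.sum_add_distrib]

theorem count_particles (σ : S.PConf) (x : V) :
    (S.particles σ).count x = if h : x ∈ S.T then 0 else σ ⟨x, h⟩ := by
  simp only [particles, Multiset.count_sum', Multiset.count_nsmul, Multiset.count_singleton,
    mul_ite, mul_one, mul_zero]
  split_ifs with h
  · exact Finset.sum_eq_zero fun v _ => if_neg fun hv : x = v.1 => v.2 (hv ▸ h)
  · rw [Finset.sum_eq_single ⟨x, h⟩ (fun v _ hv => if_neg fun hxv => hv (Subtype.ext hxv.symm))
      (by simp), if_pos rfl]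

theorem settlesTo_act (σ : S.PConf) (ρ : S.RConf) :
    S.SettlesTo (S.particles σ, ρ) (S.act σ ρ) := by
  have hlist : ∀ l : List S.V0, S.SettlesTo ((l.map fun v => σ v • {v.1}).sum, ρ)
      (l.foldr (fun v r => (S.addAt v)^[σ v] r) ρ) := by
    intro l
    induction l with
    | nil => exact settlesTo_of_forall_mem (by simp) ρ
    | cons v l ih =>
      rw [List.map_cons, List.sum_cons, add_comm, List.foldr_cons]
      exact ih.add (S.settlesTo_iterate_addAt v (σ v) _)
  rw [particles, ← Finset.sum_map_toList]
  exact hlist _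

theorem act_add (σ τ : S.PConf) (ρ : S.RConf) :
    S.act (σ + τ) ρ = S.act σ (S.act τ ρ) := by
  have h := (S.settlesTo_act τ ρ).add (S.settlesTo_act σ (S.act τ ρ))
  rw [← S.particles_add, add_comm τ] at h
  exact (S.settlesTo_act (σ + τ) ρ).unique h

end Settling

section Toppling

theorem src_iterate_next (k : ℕ) (e : E) : S.src (S.next^[k] e) = S.src e := by
  induction k with
  | zero => rfl
  | succ k ih => rw [Function.iterate_succ_apply', S.next_src, ih]

theorem filter_src_eq_image_iterate {v : V} {e : E} (he : S.src e = v) :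
    Finset.univ.filter (fun e' => S.src e' = v) =
      (Finset.range (Function.minimalPeriod S.next e)).image (S.next^[·] e) := by
  have hper := S.next_bijective.injective.mem_periodicPts e
  ext e'
  simp only [Finset.mem_filter, Finset.mem_univ, true_and, Finset.mem_image, Finset.mem_range]
  constructor
  · rintro rfl
    obtain ⟨k, hk⟩ := S.next_cyclic e e' he
    exact ⟨k % _, Nat.mod_lt _ (Function.minimalPeriod_pos_of_mem_periodicPts hper),
      by rw [Function.iterate_mod_minimalPeriod_eq, hk]⟩
  · rintro ⟨k, -, rfl⟩
    rw [S.src_iterate_next, he]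

theorem outdeg_eq_minimalPeriod {v : V} {e : E} (he : S.src e = v) :
    S.outdeg v = Function.minimalPeriod S.next e := by
  rw [outdeg, S.filter_src_eq_image_iterate he, Finset.card_image_of_injOn, Finset.card_range]
  exact Function.iterate_injOn_Iio_minimalPeriod.mono fun _ hk => Finset.mem_range.1 hk

theorem iterate_next_outdeg {v : V} {e : E} (he : S.src e = v) :
    S.next^[S.outdeg v] e = e := by
  rw [S.outdeg_eq_minimalPeriod he, Function.iterate_minimalPeriod]

theorem map_range_iterate_next {v : V} {e : E} (he : S.src e = v) :
    (Multiset.range (S.outdeg v)).map (S.next^[·] e) =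
      (Finset.univ.filter fun e' => S.src e' = v).val := by
  rw [S.filter_src_eq_image_iterate he, Finset.image_val_of_injOn, S.outdeg_eq_minimalPeriod he]
  · rfl
  · exact Function.iterate_injOn_Iio_minimalPeriod.mono fun _ hk => Finset.mem_range.1 hk

def fire (v : V) (ρ : S.RConf) : S.RConf := (S.step (v, ρ)).2

theorem iterate_fire_apply (v : V) (k : ℕ) (ρ : S.RConf) (w : S.V0) :
    ((S.fire v)^[k] ρ).1 w = if w.1 = v then S.next^[k] (ρ.1 w) else ρ.1 w := by
  induction k with
  | zero => simp
  | succ k ih =>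
    rw [Function.iterate_succ_apply', fire, S.step_snd_apply, ih]
    split_ifs <;> simp [Function.iterate_succ_apply']

theorem iterate_fire_outdeg (v : V) (ρ : S.RConf) : (S.fire v)^[S.outdeg v] ρ = ρ := by
  refine Subtype.ext (funext fun w => ?_)
  rw [S.iterate_fire_apply]
  split_ifs with hw
  · exact S.iterate_next_outdeg ((ρ.2 w).trans hw)
  · rfl

theorem reflTransGen_move_nsmul (v : V) (hv : v ∉ S.T) (k : ℕ) (ρ : S.RConf) :
    ReflTransGen S.Move (k • {v}, ρ)
      ((Multiset.range k).map (fun i => (S.step (v, (S.fire v)^[i] ρ)).1),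
        (S.fire v)^[k] ρ) := by
  induction k with
  | zero => simpa using ReflTransGen.refl
  | succ k ih =>
    rw [succ_nsmul, Multiset.range_succ, Multiset.map_cons, Function.iterate_succ_apply' _ k]
    refine (S.reflTransGen_move_add_right ih {v}).tail ⟨v, _, hv, ?_, rfl⟩
    rw [add_comm, Multiset.singleton_add]

theorem map_range_step_fire_outdeg {v : V} (hv : v ∉ S.T) (ρ : S.RConf) :
    (Multiset.range (S.outdeg v)).map (fun i => (S.step (v, (S.fire v)^[i] ρ)).1) =
      (Finset.univ.filter fun e => S.src e = v).val.map S.head := by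
  have he : S.src (S.next (ρ.1 ⟨v, hv⟩)) = v := (S.next_src _).trans (ρ.2 _)
  rw [← S.map_range_iterate_next he, Multiset.map_map]
  refine Multiset.map_congr rfl fun i _ => ?_
  rw [S.step_fst_of_notMem hv, S.iterate_fire_apply, if_pos rfl, Function.comp_apply,
    ← Function.iterate_succ_apply' S.next, Function.iterate_succ_apply]

theorem particles_numArcs (v : V) :
    S.particles (fun w => S.numArcs v w.1) =
      ((Finset.univ.filter fun e => S.src e = v).val.map S.head).filter (· ∉ S.T) := by
  ext x
  rw [count_particles, Multiset.count_filter, Multiset.count_map]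
  split_ifs with hx
  · rfl
  · simp only [numArcs, Finset.card, Finset.filter_val, Multiset.filter_filter]
    exact congrArg Multiset.card (Multiset.filter_congr fun e _ => by rw [and_comm, eq_comm])

theorem particles_single (v : S.V0) (k : ℕ) : S.particles (Pi.single v k) = k • {v.1} := by
  ext x
  rw [count_particles, Multiset.count_nsmul, Multiset.count_singleton]
  split_ifs with hx hxv hxv
  · exact absurd (hxv ▸ hx) v.2
  · simp
  · obtain rfl : (⟨x, hx⟩ : S.V0) = v := Subtype.ext hxv
    simp
  · simp [Subtype.ext_iff, hxv]

/-- `d(v)` particles at `v` leave through each arc out of `v` exactly once, and the rotor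
at `v` returns to where it started. -/
theorem act_single_outdeg (v : S.V0) (ρ : S.RConf) :
    S.act (Pi.single v (S.outdeg v.1)) ρ = S.act (fun w => S.numArcs v.1 w.1) ρ := by
  have hfire := S.reflTransGen_move_nsmul v.1 v.2 (S.outdeg v.1) ρ
  rw [S.map_range_step_fire_outdeg v.2, S.iterate_fire_outdeg,
    ← Multiset.filter_add_not (· ∉ S.T) (Multiset.map S.head _), ← particles_numArcs,
    ← S.particles_single] at hfire
  refine (S.settlesTo_act _ ρ).unique (SettlesTo.head hfire ((S.settlesTo_act _ ρ).add ?_))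
  exact settlesTo_of_forall_mem (fun x hx => not_not.1 (Multiset.mem_filter.1 hx).2) _

theorem act_sum_congr {ι : Type*} (s : Finset ι) {f g : ι → S.PConf}
    (h : ∀ i ∈ s, S.act (f i) = S.act (g i)) :
    S.act (∑ i ∈ s, f i) = S.act (∑ i ∈ s, g i) := by
  classical
  induction s using Finset.induction_on with
  | empty => rfl
  | insert a s ha ih =>
    simp only [Finset.sum_insert ha]
    funext ρ
    rw [S.act_add, S.act_add, h a (Finset.mem_insert_self a s),
      ih fun i hi => h i (Finset.mem_insert_of_mem hi)]

theorem act_toppleStep (σ : S.PConf) (ρ : S.RConf) :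
    S.act (S.toppleStep σ) ρ = S.act σ ρ := by
  set U := Finset.univ.filter fun v : S.V0 => S.outdeg v.1 ≤ σ v
  set rest : S.PConf := fun w => if S.outdeg w.1 ≤ σ w then σ w - S.outdeg w.1 else σ w
  have hσ : σ = rest + ∑ v ∈ U, Pi.single v (S.outdeg v.1) := by
    funext w
    simp only [rest, U, Pi.add_apply, Finset.sum_apply, Finset.sum_pi_single, Finset.mem_filter,
      Finset.mem_univ, true_and]
    split_ifs <;> omega
  have htopple : S.toppleStep σ = rest + ∑ v ∈ U, fun w => S.numArcs v.1 w.1 := by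
    funext w
    simp only [toppleStep, rest, U, Pi.add_apply, Finset.sum_apply, Finset.sum_filter, ite_apply,
      Pi.zero_apply]
  rw [htopple, S.act_add, ← S.act_sum_congr U fun v _ => funext (S.act_single_outdeg v),
    ← S.act_add, ← hσ]

theorem act_stabilize (σ : S.PConf) (ρ : S.RConf) : S.act (S.stabilize σ) ρ = S.act σ ρ := by
  have hiter : ∀ n, S.act (S.toppleStep^[n] σ) ρ = S.act σ ρ := by
    intro n
    induction n with
    | zero => rfl
    | succ n ih => rw [Function.iterate_succ_apply', S.act_toppleStep, ih]
  unfold stabilize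
  split
  · exact hiter _
  · rfl

end Toppling

section Equivalence

variable {S}

theorem REquiv.refl (ρ : S.RConf) : S.REquiv ρ ρ := ⟨0, rfl⟩

theorem REquiv.symm {ρ ρ' : S.RConf} (h : S.REquiv ρ ρ') : S.REquiv ρ' ρ :=
  let ⟨σ, hσ⟩ := h
  ⟨σ, hσ.symm⟩

theorem act_comm (σ τ : S.PConf) (ρ : S.RConf) : S.act σ (S.act τ ρ) = S.act τ (S.act σ ρ) := by
  rw [← S.act_add, add_comm, S.act_add]

theorem REquiv.trans {ρ₁ ρ₂ ρ₃ : S.RConf} (h₁₂ : S.REquiv ρ₁ ρ₂) (h₂₃ : S.REquiv ρ₂ ρ₃) :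
    S.REquiv ρ₁ ρ₃ := by
  obtain ⟨σ, hσ⟩ := h₁₂
  obtain ⟨τ, hτ⟩ := h₂₃
  refine ⟨τ + σ, ?_⟩
  rw [S.act_add, hσ, S.act_comm, hτ, S.act_comm, ← S.act_add]

theorem REquiv.act {ρ ρ' : S.RConf} (h : S.REquiv ρ ρ') (σ : S.PConf) :
    S.REquiv (S.act σ ρ) (S.act σ ρ') := by
  obtain ⟨τ, hτ⟩ := h
  exact ⟨τ, by rw [S.act_comm, hτ, S.act_comm]⟩

theorem REquiv.of_act {σ : S.PConf} {ρ ρ' : S.RConf}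
    (h : S.REquiv (S.act σ ρ) (S.act σ ρ')) : S.REquiv ρ ρ' := by
  obtain ⟨τ, hτ⟩ := h
  exact ⟨τ + σ, by rw [S.act_add, hτ, ← S.act_add]⟩

variable (S)

def requivSetoid : Setoid S.RConf := ⟨S.REquiv, ⟨REquiv.refl, REquiv.symm, REquiv.trans⟩⟩

/-- On the finite set of classes `[ρ] ↦ [σρ]` is injective, hence surjective. -/
theorem exists_act_requiv (σ : S.PConf) (ρ : S.RConf) : ∃ ρ', S.REquiv (S.act σ ρ') ρ := by
  let F : Quotient S.requivSetoid → Quotient S.requivSetoid :=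
    Quotient.map (S.act σ) fun _ _ h => h.act σ
  have hF : Function.Injective F := by
    rintro ⟨ρ₁⟩ ⟨ρ₂⟩ h
    exact Quotient.sound (Quotient.exact h).of_act
  obtain ⟨⟨ρ'⟩, hρ'⟩ := Finite.injective_iff_surjective.1 hF ⟦ρ⟧
  exact ⟨ρ', Quotient.exact hρ'⟩

end Equivalence

end RotorSystem

/-- **Corollary (the sandpile group acts on equivalence classes).**
For every particle configuration `σ`, the induced map `[ρ] ↦ [σρ]` on equivalence
classes of rotor configurations is well defined and bijective.  Consequently the
action of the sandpile monoid projects to a group action of the sandpile group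
`S(G/T)` on equivalence classes: the action is compatible with
addition-then-stabilization and the identity `e` acts trivially. -/
theorem act_permutes_classes {V E : Type} [Fintype V] [DecidableEq V] [Fintype E]
    [DecidableEq E] (S : RotorSystem V E)
    (e : S.PConf) (he : S.IsSandpileIdentity e) :
    (∀ (σ : S.PConf) (ρ ρ' : S.RConf),
        S.REquiv ρ ρ' → S.REquiv (S.act σ ρ) (S.act σ ρ')) ∧
    (∀ (σ : S.PConf) (ρ ρ' : S.RConf),
        S.REquiv (S.act σ ρ) (S.act σ ρ') → S.REquiv ρ ρ') ∧
    (∀ (σ : S.PConf) (ρ : S.RConf), ∃ ρ' : S.RConf, S.REquiv (S.act σ ρ') ρ) ∧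
    (∀ (σ₁ σ₂ : S.PConf) (ρ : S.RConf),
        S.REquiv (S.act (S.stabilize (σ₁ + σ₂)) ρ) (S.act σ₁ (S.act σ₂ ρ))) ∧
    (∀ ρ : S.RConf, S.REquiv (S.act e ρ) ρ) := by
  refine ⟨fun σ _ _ h => h.act σ, fun _ _ _ h => h.of_act, S.exists_act_requiv,
    fun σ₁ σ₂ ρ => ?_, fun ρ => ⟨e, ?_⟩⟩
  · rw [S.act_stabilize, S.act_add]
    exact .refl _
  · rw [← S.act_add, ← S.act_stabilize, he.2 e he.1]
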